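/- arXiv:2210.13150 — 2 statements merged into one kernel-verified Lean document; each statement's English description precedes it below -/
import Mathlib

section
/- Let f_W be an L-layer network f_W(x) = W_L σ(W_{L-1} σ(⋯ σ(W_1 x))) with each σ being 1-Lipschitz and σ(0)=0. For any input x with ‖x‖₂ ≤ B and perturbations U₁,…,U_L satisfying ‖Uₗ‖₂ ≤ (1/L)‖Wₗ‖₂ for all l, we have ‖f_{W+U}(x) − f_W(x)‖₂ ≤ e·B·(∏ₗ ‖Wₗ‖₂)·∑ₗ ‖Uₗ‖₂/‖Wₗ‖₂. -/
/-
Let y_k and y'_k be the outputs of the first k layers of the original and the perturbed network.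
Since the activations are 1-Lipschitz and vanish at 0,
‖y'_{k+1} - y_{k+1}‖ ≤ ‖W_k‖ ‖y'_k - y_k‖ + ‖U_k‖ ‖y'_k‖, while ‖y'_k‖ ≤ (1 + δ)^k B ∏_{l<k} ‖W_l‖
when ‖U_l‖ ≤ δ ‖W_l‖. Induction on k bounds ‖y'_k - y_k‖ by
(1 + δ)^k B (∏_{l<k} ‖W_l‖) ∑_{l<k} ‖U_l‖ / ‖W_l‖, and for δ = 1/L we have (1 + 1/L)^L ≤ e.
-/

open Matrix

/-- Spectral (operator) norm of a real matrix. -/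
noncomputable def specNorm {m n : Type*} [Fintype m] [Fintype n] [DecidableEq n]
    (W : Matrix m n ℝ) : ℝ :=
  ‖LinearMap.toContinuousLinearMap (Matrix.toEuclideanLin W)‖

/-- Forward pass of a layered network: `net n W φ x l` is the output after `l` layers,
where layer `l` applies the activation `φ l` followed by the linear map `W l`.
(The original network `W_L σ(W_{L-1} σ(⋯ σ(W_1 x)))` is the special case `φ 0 = id`;
all activations are assumed `1`-Lipschitz with `φ l 0 = 0`, which `id` satisfies.) -/
noncomputable def net (n : ℕ → ℕ)
    (W : ∀ l : ℕ, Matrix (Fin (n (l + 1))) (Fin (n l)) ℝ)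
    (φ : ∀ l : ℕ, EuclideanSpace ℝ (Fin (n l)) → EuclideanSpace ℝ (Fin (n l)))
    (x : EuclideanSpace ℝ (Fin (n 0))) : (l : ℕ) → EuclideanSpace ℝ (Fin (n l))
  | 0 => x
  | l + 1 => Matrix.toEuclideanLin (W l) (φ l (net n W φ x l))

lemma specNorm_nonneg {m n : Type*} [Fintype m] [Fintype n] [DecidableEq n]
    (W : Matrix m n ℝ) : 0 ≤ specNorm W :=
  norm_nonneg _

lemma norm_toEuclideanLin_le {m n : Type*} [Fintype m] [Fintype n] [DecidableEq n]
    (W : Matrix m n ℝ) (v : EuclideanSpace ℝ n) :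
    ‖Matrix.toEuclideanLin W v‖ ≤ specNorm W * ‖v‖ :=
  (LinearMap.toContinuousLinearMap (Matrix.toEuclideanLin W)).le_opNorm v

lemma specNorm_add_le {m n : Type*} [Fintype m] [Fintype n] [DecidableEq n]
    (A B : Matrix m n ℝ) : specNorm (A + B) ≤ specNorm A + specNorm B := by
  simpa only [specNorm, map_add] using norm_add_le _ _

lemma prod_mul_sum_div_range_succ (w u : ℕ → ℝ) (k : ℕ) (hw : w k ≠ 0) :
    (∏ l ∈ Finset.range (k + 1), w l) * ∑ l ∈ Finset.range (k + 1), u l / w l =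
      w k * ((∏ l ∈ Finset.range k, w l) * ∑ l ∈ Finset.range k, u l / w l) +
        u k * ∏ l ∈ Finset.range k, w l := by
  rw [Finset.prod_range_succ, Finset.sum_range_succ]
  field_simp

section Network

variable {n : ℕ → ℕ} {φ : ∀ l : ℕ, EuclideanSpace ℝ (Fin (n l)) → EuclideanSpace ℝ (Fin (n l))}
  {B : ℝ} {x : EuclideanSpace ℝ (Fin (n 0))}
  (W U : ∀ l : ℕ, Matrix (Fin (n (l + 1))) (Fin (n l)) ℝ)

lemma norm_net_le (hφ : ∀ l, LipschitzWith 1 (φ l)) (hφ0 : ∀ l, φ l 0 = 0)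
    (hx : ‖x‖ ≤ B) (k : ℕ) :
    ‖net n W φ x k‖ ≤ B * ∏ l ∈ Finset.range k, specNorm (W l) := by
  induction k with
  | zero => simpa [net] using hx
  | succ k ih =>
    calc ‖net n W φ x (k + 1)‖ ≤ specNorm (W k) * ‖φ k (net n W φ x k)‖ :=
          norm_toEuclideanLin_le _ _
      _ ≤ specNorm (W k) * (B * ∏ l ∈ Finset.range k, specNorm (W l)) := by
          gcongr
          · exact specNorm_nonneg _
          · exact ((hφ k).norm_le_mul (hφ0 k) _).trans (by simpa using ih)
      _ = B * ∏ l ∈ Finset.range (k + 1), specNorm (W l) := by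
          rw [Finset.prod_range_succ]; ring

lemma norm_net_add_le (hφ : ∀ l, LipschitzWith 1 (φ l)) (hφ0 : ∀ l, φ l 0 = 0)
    (hx : ‖x‖ ≤ B) {δ : ℝ} {k : ℕ}
    (hU : ∀ l < k, specNorm (U l) ≤ δ * specNorm (W l)) :
    ‖net n (fun l => W l + U l) φ x k‖ ≤
      (1 + δ) ^ k * B * ∏ l ∈ Finset.range k, specNorm (W l) := by
  have hprod : ∏ l ∈ Finset.range k, specNorm (W l + U l) ≤
      ∏ l ∈ Finset.range k, (1 + δ) * specNorm (W l) := by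
    refine Finset.prod_le_prod (fun l _ => specNorm_nonneg _) fun l hl => ?_
    have := hU l (Finset.mem_range.mp hl)
    linarith [specNorm_add_le (W l) (U l)]
  have hB : 0 ≤ B := (norm_nonneg x).trans hx
  calc ‖net n (fun l => W l + U l) φ x k‖
        ≤ B * ∏ l ∈ Finset.range k, specNorm (W l + U l) := norm_net_le _ hφ hφ0 hx k
    _ ≤ B * ∏ l ∈ Finset.range k, (1 + δ) * specNorm (W l) := mul_le_mul_of_nonneg_left hprod hB
    _ = (1 + δ) ^ k * B * ∏ l ∈ Finset.range k, specNorm (W l) := by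
        rw [Finset.prod_mul_distrib, Finset.prod_const, Finset.card_range]; ring

lemma norm_net_add_sub_net_succ_le (hφ : ∀ l, LipschitzWith 1 (φ l)) (hφ0 : ∀ l, φ l 0 = 0)
    (k : ℕ) :
    ‖net n (fun l => W l + U l) φ x (k + 1) - net n W φ x (k + 1)‖ ≤
      specNorm (W k) * ‖net n (fun l => W l + U l) φ x k - net n W φ x k‖ +
        specNorm (U k) * ‖net n (fun l => W l + U l) φ x k‖ := by
  set y' := net n (fun l => W l + U l) φ x k
  set y := net n W φ x k
  have hsplit : net n (fun l => W l + U l) φ x (k + 1) - net n W φ x (k + 1) =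
      Matrix.toEuclideanLin (W k) (φ k y' - φ k y) + Matrix.toEuclideanLin (U k) (φ k y') := by
    change Matrix.toEuclideanLin (W k + U k) (φ k y') - Matrix.toEuclideanLin (W k) (φ k y) = _
    rw [map_add, LinearMap.add_apply, map_sub]
    abel
  rw [hsplit]
  refine (norm_add_le _ _).trans (add_le_add ?_ ?_)
  · refine (norm_toEuclideanLin_le _ _).trans (mul_le_mul_of_nonneg_left ?_ (specNorm_nonneg _))
    simpa [dist_eq_norm] using (hφ k).dist_le_mul y' y
  · refine (norm_toEuclideanLin_le _ _).trans (mul_le_mul_of_nonneg_left ?_ (specNorm_nonneg _))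
    simpa using (hφ k).norm_le_mul (hφ0 k) y'

lemma norm_net_add_sub_net_le (hφ : ∀ l, LipschitzWith 1 (φ l)) (hφ0 : ∀ l, φ l 0 = 0)
    (hx : ‖x‖ ≤ B) {δ : ℝ} (hδ : 0 ≤ δ) {k : ℕ} (hW : ∀ l < k, 0 < specNorm (W l))
    (hU : ∀ l < k, specNorm (U l) ≤ δ * specNorm (W l)) :
    ‖net n (fun l => W l + U l) φ x k - net n W φ x k‖ ≤
      (1 + δ) ^ k * B * (∏ l ∈ Finset.range k, specNorm (W l)) *
        ∑ l ∈ Finset.range k, specNorm (U l) / specNorm (W l) := by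
  induction k with
  | zero => simp [net]
  | succ k ih =>
    have hWk := hW k k.lt_succ_self
    have hB : 0 ≤ B := (norm_nonneg x).trans hx
    have hPS : 0 ≤ (∏ l ∈ Finset.range (k + 1), specNorm (W l)) *
        ∑ l ∈ Finset.range (k + 1), specNorm (U l) / specNorm (W l) :=
      mul_nonneg (Finset.prod_nonneg fun _ _ => specNorm_nonneg _)
        (Finset.sum_nonneg fun _ _ => div_nonneg (specNorm_nonneg _) (specNorm_nonneg _))
    have ih := ih (fun l hl => hW l (hl.trans k.lt_succ_self))
      (fun l hl => hU l (hl.trans k.lt_succ_self))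
    have hnorm := norm_net_add_le W U hφ hφ0 hx (k := k)
      (fun l hl => hU l (hl.trans k.lt_succ_self))
    calc _ ≤ specNorm (W k) * ‖net n (fun l => W l + U l) φ x k - net n W φ x k‖ +
            specNorm (U k) * ‖net n (fun l => W l + U l) φ x k‖ :=
          norm_net_add_sub_net_succ_le W U hφ hφ0 k
      _ ≤ specNorm (W k) * ((1 + δ) ^ k * B * (∏ l ∈ Finset.range k, specNorm (W l)) *
              ∑ l ∈ Finset.range k, specNorm (U l) / specNorm (W l)) +
            specNorm (U k) * ((1 + δ) ^ k * B * ∏ l ∈ Finset.range k, specNorm (W l)) := by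
          gcongr
          exact specNorm_nonneg _
      _ = (1 + δ) ^ k * B * ((∏ l ∈ Finset.range (k + 1), specNorm (W l)) *
            ∑ l ∈ Finset.range (k + 1), specNorm (U l) / specNorm (W l)) := by
          rw [prod_mul_sum_div_range_succ _ _ k hWk.ne']; ring
      _ ≤ (1 + δ) ^ (k + 1) * B * ((∏ l ∈ Finset.range (k + 1), specNorm (W l)) *
            ∑ l ∈ Finset.range (k + 1), specNorm (U l) / specNorm (W l)) := by
          gcongr
          exacts [le_add_of_nonneg_right hδ, k.le_succ]
      _ = _ := by ring

end Network

theorem network_perturbation_bound_general (L : ℕ) (n : ℕ → ℕ)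
    (W U : ∀ l : ℕ, Matrix (Fin (n (l + 1))) (Fin (n l)) ℝ)
    (φ : ∀ l : ℕ, EuclideanSpace ℝ (Fin (n l)) → EuclideanSpace ℝ (Fin (n l)))
    (hφ : ∀ l, LipschitzWith 1 (φ l)) (hφ0 : ∀ l, φ l 0 = 0)
    (B : ℝ) (x : EuclideanSpace ℝ (Fin (n 0))) (hx : ‖x‖ ≤ B)
    (hW : ∀ l < L, 0 < specNorm (W l))
    (hU : ∀ l < L, specNorm (U l) ≤ specNorm (W l) / L) :
    ‖net n (fun l => W l + U l) φ x L - net n W φ x L‖ ≤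
      Real.exp 1 * B * (∏ l ∈ Finset.range L, specNorm (W l)) *
        ∑ l ∈ Finset.range L, specNorm (U l) / specNorm (W l) := by
  have hU' : ∀ l < L, specNorm (U l) ≤ (L : ℝ)⁻¹ * specNorm (W l) := fun l hl => by
    simpa only [div_eq_inv_mul] using hU l hl
  have hB : 0 ≤ B := (norm_nonneg x).trans hx
  calc _ ≤ (1 + (L : ℝ)⁻¹) ^ L * B * (∏ l ∈ Finset.range L, specNorm (W l)) *
          ∑ l ∈ Finset.range L, specNorm (U l) / specNorm (W l) :=
        norm_net_add_sub_net_le W U hφ hφ0 hx (by positivity) hW hU'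
    _ ≤ _ := by
        gcongr
        · exact Finset.sum_nonneg fun _ _ => div_nonneg (specNorm_nonneg _) (specNorm_nonneg _)
        · exact Finset.prod_nonneg fun _ _ => specNorm_nonneg _
        · exact Real.one_add_inv_pow_le_exp

/-- Perturbation bound for layered networks (Neyshabur et al. style). -/
theorem network_perturbation_bound (L : ℕ) (hL : 0 < L) (n : ℕ → ℕ)
    (W U : ∀ l : ℕ, Matrix (Fin (n (l + 1))) (Fin (n l)) ℝ)
    (φ : ∀ l : ℕ, EuclideanSpace ℝ (Fin (n l)) → EuclideanSpace ℝ (Fin (n l)))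
    (hφ : ∀ l, LipschitzWith 1 (φ l)) (hφ0 : ∀ l, φ l 0 = 0)
    (B : ℝ) (x : EuclideanSpace ℝ (Fin (n 0))) (hx : ‖x‖ ≤ B)
    (hW : ∀ l < L, 0 < specNorm (W l))
    (hU : ∀ l < L, specNorm (U l) ≤ specNorm (W l) / L) :
    ‖net n (fun l => W l + U l) φ x L - net n W φ x L‖ ≤
      Real.exp 1 * B * (∏ l ∈ Finset.range L, specNorm (W l)) *
        ∑ l ∈ Finset.range L, specNorm (U l) / specNorm (W l) :=
  network_perturbation_bound_general L n W U φ hφ hφ0 B x hx hW hU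
end

section
/- Let Z be a chi-square random variable with k degrees of freedom (sum of k squared i.i.d. standard Gaussians), scaled by σ², i.e., Z = σ²∑_{i=1}^k Xᵢ². Then for all t ≥ 0, P(Z ≥ σ²(k + 2√(kt) + 2t)) ≤ e^{−t}. -/
/-!
Chernoff's method. If `X` is standard Gaussian then `E[exp (c X²)] = (1 - 2c)^(-1/2)` for
`c < 1/2`, so by independence `∑ Xᵢ²` has moment generating function `(1 - 2c)^(-k/2)`.
Writing the threshold as `k q` with `q = 1 + 2s + 2s²` and `t = k s²`, the choice
`1 - 2c = q⁻¹` gives the bound `exp (-k (s + s²)) * √q ^ k`, and `√q ≤ exp s` because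
`q` is the degree-two Taylor polynomial of `exp (2s)`.
-/

open MeasureTheory ProbabilityTheory Real

namespace ProbabilityTheory

lemma gaussianPDFReal_mul_exp_mul_sq (c x : ℝ) :
    gaussianPDFReal 0 1 x * exp (c * x ^ 2) = (√(2 * π))⁻¹ * exp (-(1 / 2 - c) * x ^ 2) := by
  simp only [gaussianPDFReal, NNReal.coe_one, mul_one, sub_zero]
  rw [mul_assoc, ← exp_add]
  ring_nf

lemma integrable_exp_mul_sq_gaussianReal {c : ℝ} (hc : c < 1 / 2) :
    Integrable (fun x ↦ exp (c * x ^ 2)) (gaussianReal 0 1) := by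
  rw [gaussianReal_of_var_ne_zero _ one_ne_zero,
    integrable_withDensity_iff_integrable_smul' (measurable_gaussianPDF 0 1)
      (ae_of_all _ fun _ ↦ gaussianPDF_lt_top)]
  simp only [toReal_gaussianPDF, smul_eq_mul, gaussianPDFReal_mul_exp_mul_sq]
  exact (integrable_exp_neg_mul_sq (by linarith)).const_mul _

lemma mgf_sq_gaussianReal {c : ℝ} (hc : c < 1 / 2) :
    mgf (fun x ↦ x ^ 2) (gaussianReal 0 1) c = (√(1 - 2 * c))⁻¹ := by
  rw [mgf, integral_gaussianReal_eq_integral_smul one_ne_zero]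
  simp only [smul_eq_mul, gaussianPDFReal_mul_exp_mul_sq]
  have hc' : 0 < 1 - 2 * c := by linarith
  have : √(π / (1 / 2 - c)) = √(2 * π) * (√(1 - 2 * c))⁻¹ := by
    rw [← sqrt_inv, ← sqrt_mul (by positivity)]
    congr 1
    field_simp
  rw [integral_const_mul, integral_gaussian, this, ← mul_assoc,
    inv_mul_cancel₀ (by positivity), one_mul]

variable {Ω : Type*} {m : MeasurableSpace Ω} {μ : Measure Ω} {X : Ω → ℝ} {c : ℝ}

lemma integrable_exp_mul_sq_of_map_eq_gaussianReal (hX : μ.map X = gaussianReal 0 1)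
    (hc : c < 1 / 2) : Integrable (fun ω ↦ exp (c * X ω ^ 2)) μ := by
  have hX_meas : AEMeasurable X μ := aemeasurable_of_map_neZero (by rw [hX]; infer_instance)
  have := integrable_exp_mul_sq_gaussianReal hc
  rwa [← hX, integrable_map_measure (by fun_prop) hX_meas] at this

lemma mgf_sq_of_map_eq_gaussianReal (hX : μ.map X = gaussianReal 0 1) (hc : c < 1 / 2) :
    mgf (fun ω ↦ X ω ^ 2) μ c = (√(1 - 2 * c))⁻¹ := by
  have hX_meas : AEMeasurable X μ := aemeasurable_of_map_neZero (by rw [hX]; infer_instance)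
  rw [← mgf_sq_gaussianReal hc, ← hX, mgf_map hX_meas (by fun_prop)]
  rfl

lemma measureReal_sum_sq_ge_le_exp_mul_inv_sqrt_pow [IsFiniteMeasure μ] {ι : Type*} [Fintype ι]
    {X : ι → Ω → ℝ} (hmeas : ∀ i, Measurable (X i)) (hindep : iIndepFun X μ)
    (hgauss : ∀ i, μ.map (X i) = gaussianReal 0 1) (hc0 : 0 ≤ c) (hc : c < 1 / 2) (a : ℝ) :
    μ.real {ω | a ≤ ∑ i, X i ω ^ 2} ≤ exp (-c * a) * (√(1 - 2 * c))⁻¹ ^ Fintype.card ι := by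
  set Y : ι → Ω → ℝ := fun i ω ↦ X i ω ^ 2
  have hY_meas : ∀ i, Measurable (Y i) := fun i ↦ (hmeas i).pow_const 2
  have hY_indep : iIndepFun Y μ := hindep.comp (fun _ x ↦ x ^ 2) fun _ ↦ by fun_prop
  have hint : Integrable (fun ω ↦ exp (c * (∑ i, Y i) ω)) μ :=
    hY_indep.integrable_exp_mul_sum hY_meas fun i _ ↦
      integrable_exp_mul_sq_of_map_eq_gaussianReal (hgauss i) hc
  have hmgf : mgf (∑ i, Y i) μ c = (√(1 - 2 * c))⁻¹ ^ Fintype.card ι := by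
    rw [hY_indep.mgf_sum hY_meas, Finset.prod_congr rfl fun i _ ↦
      mgf_sq_of_map_eq_gaussianReal (hgauss i) hc, Finset.prod_const, Finset.card_univ]
  have hset : {ω | a ≤ ∑ i, X i ω ^ 2} = {ω | a ≤ (∑ i, Y i) ω} := by
    ext ω; simp [Y]
  rw [hset, ← hmgf]
  exact measure_ge_le_exp_mul_mgf a hc0 hint

lemma sqrt_one_add_two_mul_add_two_mul_sq_le_exp {s : ℝ} (hs : 0 ≤ s) :
    √(1 + 2 * s + 2 * s ^ 2) ≤ exp s := by
  rw [sqrt_le_left (exp_pos s).le, ← exp_nat_mul]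
  have := quadratic_le_exp_of_nonneg (mul_nonneg zero_le_two hs)
  push_cast
  linarith

lemma measureReal_sum_sq_ge_le_exp_neg_card_mul_sq [IsFiniteMeasure μ] {ι : Type*} [Fintype ι]
    {X : ι → Ω → ℝ} (hmeas : ∀ i, Measurable (X i)) (hindep : iIndepFun X μ)
    (hgauss : ∀ i, μ.map (X i) = gaussianReal 0 1) {s : ℝ} (hs : 0 ≤ s) :
    μ.real {ω | Fintype.card ι * (1 + 2 * s + 2 * s ^ 2) ≤ ∑ i, X i ω ^ 2}
      ≤ exp (-(Fintype.card ι * s ^ 2)) := by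
  set q : ℝ := 1 + 2 * s + 2 * s ^ 2
  have hq : 1 ≤ q := by nlinarith
  have hchernoff := measureReal_sum_sq_ge_le_exp_mul_inv_sqrt_pow hmeas hindep hgauss (c := (1 - q⁻¹) / 2)
    (by linarith [inv_le_one_of_one_le₀ hq]) (by linarith [inv_pos.2 (by linarith : 0 < q)])
    (Fintype.card ι * q)
  have hc : 1 - 2 * ((1 - q⁻¹) / 2) = q⁻¹ := by ring
  rw [hc, sqrt_inv, inv_inv] at hchernoff
  refine hchernoff.trans ?_
  calc exp (-((1 - q⁻¹) / 2) * (Fintype.card ι * q)) * √q ^ Fintype.card ι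
      ≤ exp (-(Fintype.card ι * (s + s ^ 2))) * exp s ^ Fintype.card ι := by
        gcongr
        · exact (by field_simp; ring : _ = _).le
        · exact sqrt_one_add_two_mul_add_two_mul_sq_le_exp hs
    _ = exp (-(Fintype.card ι * s ^ 2)) := by rw [← exp_nat_mul, ← exp_add]; ring_nf

end ProbabilityTheory

/-- Tail bound for a scaled chi-square variable `Z = σ² ∑ᵢ Xᵢ²` with `k` degrees of
freedom: `P(Z ≥ σ²(k + 2√(kt) + 2t)) ≤ e^{−t}`. -/
theorem chi_square_tail_bound {Ω : Type*} [MeasureSpace Ω]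
    [IsProbabilityMeasure (ℙ : Measure Ω)]
    {k : ℕ} (X : Fin k → Ω → ℝ) (hmeas : ∀ i, Measurable (X i))
    (hindep : iIndepFun X ℙ)
    (hgauss : ∀ i, Measure.map (X i) ℙ = gaussianReal 0 1)
    (σ : ℝ) (hσ : 0 < σ) (t : ℝ) (ht : 0 ≤ t) :
    ℙ {ω | σ ^ 2 * ((k : ℝ) + 2 * Real.sqrt (k * t) + 2 * t)
        ≤ σ ^ 2 * ∑ i, (X i ω) ^ 2} ≤ ENNReal.ofReal (Real.exp (-t)) := by
  simp_rw [mul_le_mul_iff_right₀ (pow_pos hσ 2)]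
  rcases k.eq_zero_or_pos with rfl | hk
  · rcases ht.eq_or_lt with rfl | ht
    · simp
    · simp [show ¬2 * t ≤ 0 by linarith]
  set s := √(t / k)
  have hk' : (0 : ℝ) < k := Nat.cast_pos.2 hk
  have ht_eq : t = k * s ^ 2 := by
    rw [sq_sqrt (by positivity)]; field_simp
  have hthreshold : (k : ℝ) + 2 * √(k * t) + 2 * t = k * (1 + 2 * s + 2 * s ^ 2) := by
    rw [ht_eq, show (k : ℝ) * (k * s ^ 2) = (k * s) ^ 2 by ring, sqrt_sq (by positivity)]
    ring
  have htail := measureReal_sum_sq_ge_le_exp_neg_card_mul_sq hmeas hindep hgauss (sqrt_nonneg (t / k))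
  rw [Fintype.card_fin, ← hthreshold, ← ht_eq, measureReal_def] at htail
  rwa [ENNReal.le_ofReal_iff_toReal_le (measure_ne_top _ _) (exp_pos _).le]
end
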